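/- Let n be odd and m ≥ 2. Then the m-th derivative of T_n at 0 satisfies the recursion T_n^{(m)}(0) = -(n^2 - (m-2)^2) · T_n^{(m-2)}(0); in particular T_n^{(m)}(0) = 0 for even m, and ν_3(T_n^{(m)}(0)) ≥ ν_3(n^2-1) for all odd m ≥ 3. -/

import Mathlib

open Polynomial Polynomial.Chebyshev

lemma cheb_ode (R : Type*) [CommRing R] (n : ℤ) :
    (1 - X ^ 2) * derivative (derivative (T R n)) + (n : R[X]) ^ 2 * T R n
      = X * derivative (T R n) := by
  have h1 := T_derivative_eq_U (R := R) n
  have h2 := add_one_mul_T_eq_poly_in_U (R := R) (n - 1)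
  have h4 := congr_arg derivative h1
  simp only [derivative_mul, derivative_intCast, zero_mul, zero_add] at h4
  rw [sub_add_cancel] at h2
  push_cast at h2
  linear_combination (1 - X^2) * h4 + (n : R[X]) * h2 - X * h1

lemma cheb_iter (n : ℤ) (k : ℕ) :
    (1 - X ^ 2) * derivative^[k + 2] (T ℤ n)
      = (2 * (k : ℤ[X]) + 1) * X * derivative^[k + 1] (T ℤ n)
        + ((k : ℤ[X]) ^ 2 - (n : ℤ[X]) ^ 2) * derivative^[k] (T ℤ n) := by
  induction k with
  | zero =>
      simp only [Function.iterate_succ_apply', Function.iterate_zero, id_eq, Nat.cast_zero]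
      linear_combination cheb_ode ℤ n
  | succ k ih =>
      have h := congr_arg derivative ih
      simp only [derivative_mul, derivative_sub, derivative_add, derivative_one,
        derivative_X_pow, derivative_X, derivative_natCast, derivative_pow,
        derivative_ofNat, derivative_intCast, Nat.cast_ofNat, map_ofNat,
        ← Function.iterate_succ_apply'] at h
      push_cast
      linear_combination h

lemma cheb_eval_rec (n : ℤ) (k : ℕ) :
    (derivative^[k + 2] (T ℤ n)).eval 0
      = ((k : ℤ) ^ 2 - (n : ℤ) ^ 2) * (derivative^[k] (T ℤ n)).eval 0 := by
  have h := congr_arg (Polynomial.eval (0 : ℤ)) (cheb_iter n k)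
  simpa using h

lemma cheb_T_zero (n : ℕ) (hodd : Odd n) : (T ℤ n).eval 0 = 0 := by
  obtain ⟨k, rfl⟩ := hodd
  induction k with
  | zero => simp [T_one]
  | succ k ih =>
      push_cast at ih ⊢
      rw [show (2 * ((k : ℤ) + 1) + 1) = (2 * k + 1) + 2 by ring, T_add_two]
      simp [ih]

/-- For `n` odd and `m ≥ 2`, the `m`-th derivative of `T_n` at `0` satisfies the recursion
`T_n^{(m)}(0) = -(n ^ 2 - (m - 2) ^ 2) * T_n^{(m-2)}(0)`; in particular `T_n^{(m)}(0) = 0`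
for even `m`, and `ν₃ (T_n^{(m)}(0)) ≥ ν₃ (n ^ 2 - 1)` for all odd `m ≥ 3`, stated as
divisibility by `3 ^ ν₃ (n ^ 2 - 1)`. -/
theorem chebyshev_iterated_deriv_zero (n : ℕ) (hn : 0 < n) (hodd : Odd n) :
    (∀ m : ℕ, 2 ≤ m →
      ((Polynomial.derivative)^[m] (T ℤ n)).eval 0 =
        -((n : ℤ) ^ 2 - ((m : ℤ) - 2) ^ 2) * ((Polynomial.derivative)^[m - 2] (T ℤ n)).eval 0) ∧
    (∀ m : ℕ, 2 ≤ m → Even m → ((Polynomial.derivative)^[m] (T ℤ n)).eval 0 = 0) ∧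
    (∀ m : ℕ, 3 ≤ m → Odd m →
      (3 : ℤ) ^ (padicValInt 3 ((n : ℤ) ^ 2 - 1)) ∣
        ((Polynomial.derivative)^[m] (T ℤ n)).eval 0) := by
  have hrec : ∀ m : ℕ, 2 ≤ m →
      ((Polynomial.derivative)^[m] (T ℤ n)).eval 0 =
        -((n : ℤ) ^ 2 - ((m : ℤ) - 2) ^ 2) * ((Polynomial.derivative)^[m - 2] (T ℤ n)).eval 0 := by
    intro m hm
    obtain ⟨k, rfl⟩ := Nat.exists_eq_add_of_le hm
    have h := cheb_eval_rec (n : ℤ) k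
    rw [Nat.add_comm 2 k] at *
    simpa [Nat.add_sub_cancel] using h.trans (by push_cast; ring)
  refine ⟨hrec, ?_, ?_⟩
  · intro m hm hev
    obtain ⟨j, rfl⟩ := hev
    have hj : 1 ≤ j := by omega
    clear hm
    induction j with
    | zero => omega
    | succ j ih =>
        have h := hrec (j + 1 + (j + 1)) (by omega)
        rw [h]
        rcases Nat.eq_zero_or_pos j with rfl | hj'
        · simp [cheb_T_zero n hodd]
        · have : j + 1 + (j + 1) - 2 = j + j := by omega
          rw [this, ih hj']
          ring
  · intro m hm hmodd
    obtain ⟨j, rfl⟩ := hmodd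
    have hj : 1 ≤ j := by omega
    clear hm
    induction j with
    | zero => omega
    | succ j ih =>
        have h := hrec (2 * (j + 1) + 1) (by omega)
        rw [h]
        rcases Nat.eq_zero_or_pos j with rfl | hj'
        · have hdvd : (3 : ℤ) ^ (padicValInt 3 ((n : ℤ) ^ 2 - 1)) ∣ ((n : ℤ) ^ 2 - 1) := by
            have := padicValInt_dvd (p := 3) ((n : ℤ) ^ 2 - 1)
            simpa using this
          have h1 : (2 * 1 + 1 - 2 : ℕ) = 1 := by norm_num
          rw [h1, show -((n : ℤ) ^ 2 - (((2 * 1 + 1 : ℕ) : ℤ) - 2) ^ 2)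
              = -((n : ℤ) ^ 2 - 1) by push_cast; ring]
          exact dvd_mul_of_dvd_left (dvd_neg.mpr hdvd) _
        · have h2 : 2 * (j + 1) + 1 - 2 = 2 * j + 1 := by omega
          rw [h2]
          exact dvd_mul_of_dvd_right (ih hj') _
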